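/- For p = 4, the function ζ = log((x1²+x2²)²+16x3²) satisfies Δ₄ ζ = X1(‖∇₀ζ‖² X1ζ) + X2(‖∇₀ζ‖² X2ζ) = 0 on ℝ³ \ {0}. -/

import Mathlib

noncomputable section

abbrev P3 : Type := ℝ × ℝ × ℝ

/-- Heisenberg vector field X1 = ∂/∂x1 - (x2/2) ∂/∂x3 (real-valued functions). -/
def X1r (u : P3 → ℝ) (p : P3) : ℝ :=
  fderiv ℝ u p (1, 0, 0) - p.2.1 / 2 * fderiv ℝ u p (0, 0, 1)

/-- Heisenberg vector field X2 = ∂/∂x2 + (x1/2) ∂/∂x3 (real-valued functions). -/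
def X2r (u : P3 → ℝ) (p : P3) : ℝ :=
  fderiv ℝ u p (0, 1, 0) + p.1 / 2 * fderiv ℝ u p (0, 0, 1)

def zeta4 (q : P3) : ℝ := Real.log ((q.1 ^ 2 + q.2.1 ^ 2) ^ 2 + 16 * q.2.2 ^ 2)

/-!
`ρ = |z|⁴ + 16 t²` is the fourth power of the Korányi gauge. Its horizontal gradient satisfies
`|∇₀ρ|² = 16 |z|² ρ`, so for `ζ = log ρ` the 4-Laplacian flux is
`|∇₀ζ|² ∇₀ζ = 16 |z|² ∇₀ρ / ρ²`. Its horizontal divergence is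
`div₀(16 |z|² ∇₀ρ) / ρ² - 32 |z|² |∇₀ρ|² / ρ³ = 512 |z|⁴ / ρ² - 512 |z|⁴ / ρ² = 0`.
-/

open Topology

namespace Heisenberg

def X1dir (p : P3) : P3 := (1, 0, -(p.2.1 / 2))

def X2dir (p : P3) : P3 := (0, 1, p.1 / 2)

theorem X1r_eq_fderiv_apply (u : P3 → ℝ) (p : P3) : X1r u p = fderiv ℝ u p (X1dir p) := by
  have : X1dir p = ((1, 0, 0) : P3) + (-(p.2.1 / 2)) • ((0, 0, 1) : P3) := by simp [X1dir]
  rw [X1r, this, map_add, map_smul, smul_eq_mul]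
  ring

theorem X2r_eq_fderiv_apply (u : P3 → ℝ) (p : P3) : X2r u p = fderiv ℝ u p (X2dir p) := by
  have : X2dir p = ((0, 1, 0) : P3) + (p.1 / 2) • ((0, 0, 1) : P3) := by simp [X2dir]
  rw [X2r, this, map_add, map_smul, smul_eq_mul]

theorem X1r_congr {u v : P3 → ℝ} {p : P3} (h : u =ᶠ[𝓝 p] v) : X1r u p = X1r v p := by
  rw [X1r, X1r, h.fderiv_eq]

theorem X2r_congr {u v : P3 → ℝ} {p : P3} (h : u =ᶠ[𝓝 p] v) : X2r u p = X2r v p := by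
  rw [X2r, X2r, h.fderiv_eq]

theorem fderiv_div_sq_apply {E : Type*} [NormedAddCommGroup E] [NormedSpace ℝ E] {a g : E → ℝ}
    {p : E} (ha : DifferentiableAt ℝ a p) (hg : DifferentiableAt ℝ g p) (hg0 : g p ≠ 0) (v : E) :
    fderiv ℝ (fun x => a x / g x ^ 2) p v =
      fderiv ℝ a p v / g p ^ 2 - 2 * a p * fderiv ℝ g p v / g p ^ 3 := by
  have hinv : HasFDerivAt (fun x => (g x ^ 2)⁻¹) _ p :=
    (hasDerivAt_inv (pow_ne_zero 2 hg0)).comp_hasFDerivAt p (hg.hasFDerivAt.pow 2)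
  simp_rw [div_eq_mul_inv]
  rw [fderiv_fun_mul ha hinv.differentiableAt, hinv.fderiv]
  simp only [Nat.add_one_sub_one, pow_one, nsmul_eq_mul, Nat.cast_ofNat, neg_smul, smul_neg,
    add_apply, neg_apply, smul_apply, smul_eq_mul]
  field_simp
  ring

theorem X1r_add_X2r_div_sq {a b g : P3 → ℝ} {p : P3} (ha : DifferentiableAt ℝ a p)
    (hb : DifferentiableAt ℝ b p) (hg : DifferentiableAt ℝ g p) (hg0 : g p ≠ 0) :
    X1r (fun x => a x / g x ^ 2) p + X2r (fun x => b x / g x ^ 2) p =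
      (X1r a p + X2r b p) / g p ^ 2 - 2 * (a p * X1r g p + b p * X2r g p) / g p ^ 3 := by
  simp only [X1r_eq_fderiv_apply, X2r_eq_fderiv_apply, fderiv_div_sq_apply ha hg hg0,
    fderiv_div_sq_apply hb hg hg0]
  ring

def normSq (p : P3) : ℝ := p.1 ^ 2 + p.2.1 ^ 2

def rho (p : P3) : ℝ := normSq p ^ 2 + 16 * p.2.2 ^ 2

def rhoX1 (p : P3) : ℝ := 4 * p.1 * normSq p - 16 * p.2.1 * p.2.2

def rhoX2 (p : P3) : ℝ := 4 * p.2.1 * normSq p + 16 * p.1 * p.2.2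

theorem rho_pos {p : P3} (hp : p ≠ 0) : 0 < rho p := by
  obtain ⟨x, y, t⟩ := p
  unfold rho normSq
  by_cases hxy : x = 0 ∧ y = 0
  · obtain ⟨rfl, rfl⟩ := hxy
    have ht : t ≠ 0 := by rintro rfl; exact hp rfl
    positivity
  · have : 0 < x ^ 2 + y ^ 2 := by
      rcases not_and_or.mp hxy with hx | hy <;> positivity
    positivity

@[fun_prop]
theorem differentiable_normSq : Differentiable ℝ normSq := by
  unfold normSq; fun_prop

@[fun_prop]
theorem differentiable_rho : Differentiable ℝ rho := by
  unfold rho; fun_prop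

@[fun_prop]
theorem differentiable_rhoX1 : Differentiable ℝ rhoX1 := by
  unfold rhoX1; fun_prop

@[fun_prop]
theorem differentiable_rhoX2 : Differentiable ℝ rhoX2 := by
  unfold rhoX2; fun_prop

theorem fderiv_rho_apply (p v : P3) :
    fderiv ℝ rho p v = 4 * normSq p * (p.1 * v.1 + p.2.1 * v.2.1) + 32 * p.2.2 * v.2.2 := by
  unfold rho normSq
  simp (disch := fun_prop) only [fderiv_fun_add, fderiv_fun_pow, Nat.add_one_sub_one, pow_one,
    smul_add, nsmul_eq_mul, Nat.cast_ofNat, fderiv.fst, fderiv_fun_id, ContinuousLinearMap.comp_id,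
    fderiv.snd, fderiv_const_mul, add_apply, smul_apply, ContinuousLinearMap.coe_fst', smul_eq_mul,
    ContinuousLinearMap.comp_apply, ContinuousLinearMap.coe_snd']
  ring

theorem X1r_rho (p : P3) : X1r rho p = rhoX1 p := by
  rw [X1r_eq_fderiv_apply, fderiv_rho_apply, rhoX1, X1dir]
  ring

theorem X2r_rho (p : P3) : X2r rho p = rhoX2 p := by
  rw [X2r_eq_fderiv_apply, fderiv_rho_apply, rhoX2, X2dir]
  ring

theorem rhoX1_sq_add_rhoX2_sq (p : P3) :
    rhoX1 p ^ 2 + rhoX2 p ^ 2 = 16 * normSq p * rho p := by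
  unfold rhoX1 rhoX2 rho normSq
  ring

theorem X1r_add_X2r_normSq_mul_rhoX (p : P3) :
    X1r (fun x => 16 * normSq x * rhoX1 x) p + X2r (fun x => 16 * normSq x * rhoX2 x) p =
      512 * normSq p ^ 2 := by
  simp only [X1r_eq_fderiv_apply, X2r_eq_fderiv_apply]
  unfold rhoX1 rhoX2 normSq
  simp (disch := fun_prop) only [fderiv_fun_mul, fderiv_fun_sub, fderiv_fun_add, fderiv_fun_pow,
    Nat.add_one_sub_one, pow_one, nsmul_eq_mul, Nat.cast_ofNat, fderiv.fst, fderiv_fun_id,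
    ContinuousLinearMap.comp_id, fderiv.snd, smul_add, fderiv_fun_const, Pi.zero_apply, smul_zero,
    add_zero, X1dir, add_apply, smul_apply, sub_apply, ContinuousLinearMap.coe_fst', smul_eq_mul,
    mul_one, ContinuousLinearMap.comp_apply, ContinuousLinearMap.coe_snd', mul_zero, mul_neg,
    sub_neg_eq_add, X2dir, zero_add]
  ring

theorem X1r_zeta4 {p : P3} (hp : rho p ≠ 0) : X1r zeta4 p = rhoX1 p / rho p := by
  rw [X1r_eq_fderiv_apply, show zeta4 = fun x => Real.log (rho x) from rfl,
    fderiv.log (differentiable_rho p) hp, smul_apply, smul_eq_mul, ← X1r_eq_fderiv_apply,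
    X1r_rho, inv_mul_eq_div]

theorem X2r_zeta4 {p : P3} (hp : rho p ≠ 0) : X2r zeta4 p = rhoX2 p / rho p := by
  rw [X2r_eq_fderiv_apply, show zeta4 = fun x => Real.log (rho x) from rfl,
    fderiv.log (differentiable_rho p) hp, smul_apply, smul_eq_mul, ← X2r_eq_fderiv_apply,
    X2r_rho, inv_mul_eq_div]

theorem X1r_zeta4_sq_add_X2r_zeta4_sq {p : P3} (hp : rho p ≠ 0) :
    X1r zeta4 p ^ 2 + X2r zeta4 p ^ 2 = 16 * normSq p / rho p := by
  rw [X1r_zeta4 hp, X2r_zeta4 hp, div_pow, div_pow, ← add_div, rhoX1_sq_add_rhoX2_sq]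
  field_simp

end Heisenberg

open Heisenberg in
theorem heisenberg_4_harmonic (q : P3) (hq : q ≠ 0) :
    X1r (fun r => ((X1r zeta4 r) ^ 2 + (X2r zeta4 r) ^ 2) * X1r zeta4 r) q +
      X2r (fun r => ((X1r zeta4 r) ^ 2 + (X2r zeta4 r) ^ 2) * X2r zeta4 r) q = 0 := by
  have hrho : ∀ᶠ p in 𝓝 q, rho p ≠ 0 :=
    (eventually_ne_nhds hq).mono fun p hp => (rho_pos hp).ne'
  have hflux1 : (fun r => (X1r zeta4 r ^ 2 + X2r zeta4 r ^ 2) * X1r zeta4 r) =ᶠ[𝓝 q]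
      fun r => 16 * normSq r * rhoX1 r / rho r ^ 2 := by
    filter_upwards [hrho] with p hp
    rw [X1r_zeta4_sq_add_X2r_zeta4_sq hp, X1r_zeta4 hp]
    field_simp
  have hflux2 : (fun r => (X1r zeta4 r ^ 2 + X2r zeta4 r ^ 2) * X2r zeta4 r) =ᶠ[𝓝 q]
      fun r => 16 * normSq r * rhoX2 r / rho r ^ 2 := by
    filter_upwards [hrho] with p hp
    rw [X1r_zeta4_sq_add_X2r_zeta4_sq hp, X2r_zeta4 hp]
    field_simp
  rw [X1r_congr hflux1, X2r_congr hflux2,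
    X1r_add_X2r_div_sq (by fun_prop) (by fun_prop) (by fun_prop) (rho_pos hq).ne',
    X1r_add_X2r_normSq_mul_rhoX, X1r_rho, X2r_rho]
  field_simp
  rw [rhoX1_sq_add_rhoX2_sq]
  ring
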